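/- Let Y_1, …, Y_n ∈ R^d satisfy Σ_j Y_j = 0 and Σ_j Y_j Y_jᵀ = n·I_d, and define T_{n,β} by the closed form π^{d/2}[ (1/n)Σ_{i,j} β^{-d/2} exp(‖Y_i+Y_j‖²/(4β)) + n(β-1)^{-d/2} - 2Σ_j (β-1/2)^{-d/2} exp(‖Y_j‖²/(4β-2)) ]. Then lim_{β→∞} β^{3+d/2} · (96 T_{n,β})/(n π^{d/2}) = 2 b_{1,d} + 3 b̃_{1,d}, where b_{1,d} = n^{-2} Σ_{j,k} (Y_jᵀY_k)³ and b̃_{1,d} = n^{-2} Σ_{j,k} (Y_jᵀY_k)‖Y_j‖²‖Y_k‖². -/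

import Mathlib

open Filter
open scoped RealInnerProductSpace BigOperators Topology

/-!
Put `u = 1/β` and `p = d/2`. Then `β ^ p T_{n,β} / π ^ p` is a finite combination of
`exp (c u)`, `(1 - u) ^ (-p)` and `(1 - u/2) ^ (-p) exp (c u / (4 - 2u))`, whose third-order
expansions at `u = 0` are explicit. Summing them over the sample, the identities
`∑ⱼ ⟪x, Y_j⟫ = 0` and `∑ⱼ ⟪x, Y_j⟫² = n ‖x‖²` (from `∑ Y_j = 0` and `∑ Y_j Y_jᵀ = n I`) make
the coefficients of `1, u, u²` cancel and turn the coefficient of `u³` into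
`n (2 b_{1,d} + 3 b̃_{1,d}) / 96`; dividing by `u³ = β⁻³` gives the limit.
-/

open Asymptotics Finset

def HasCubicExpansion (g : ℝ → ℝ) (a₀ a₁ a₂ a₃ : ℝ) : Prop :=
  (fun u => g u - (a₀ + a₁ * u + a₂ * u ^ 2 + a₃ * u ^ 3)) =o[𝓝 0] (· ^ 3)

lemma isLittleO_cube_of_isBigO_pow_four {f : ℝ → ℝ} (h : f =O[𝓝 0] (· ^ 4)) :
    f =o[𝓝 0] (· ^ 3) :=
  h.trans_isLittleO (isLittleO_pow_pow (by norm_num))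

lemma isBigO_one_of_continuous {f : ℝ → ℝ} (hf : Continuous f) :
    f =O[𝓝 0] (fun _ => (1 : ℝ)) :=
  (hf.tendsto 0).isBigO_one ℝ

lemma hasCubicExpansion_const (a : ℝ) : HasCubicExpansion (fun _ => a) a 0 0 0 :=
  (isLittleO_zero _ _).congr_left fun u => by ring

lemma hasCubicExpansion_id : HasCubicExpansion (fun u => u) 0 1 0 0 :=
  (isLittleO_zero _ _).congr_left fun u => by ring

namespace HasCubicExpansion

variable {f g : ℝ → ℝ} {a₀ a₁ a₂ a₃ b₀ b₁ b₂ b₃ : ℝ}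

lemma congr (hfg : f =ᶠ[𝓝 0] g) (hf : HasCubicExpansion f a₀ a₁ a₂ a₃) :
    HasCubicExpansion g a₀ a₁ a₂ a₃ :=
  hf.congr' (hfg.mono fun u hu => by simp only [hu]) EventuallyEq.rfl

lemma congr_coeffs (hf : HasCubicExpansion f a₀ a₁ a₂ a₃) (h₀ : a₀ = b₀) (h₁ : a₁ = b₁)
    (h₂ : a₂ = b₂) (h₃ : a₃ = b₃) : HasCubicExpansion f b₀ b₁ b₂ b₃ := by
  subst h₀ h₁ h₂ h₃
  exact hf

lemma add (hf : HasCubicExpansion f a₀ a₁ a₂ a₃) (hg : HasCubicExpansion g b₀ b₁ b₂ b₃) :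
    HasCubicExpansion (fun u => f u + g u) (a₀ + b₀) (a₁ + b₁) (a₂ + b₂) (a₃ + b₃) :=
  (IsLittleO.add hf hg).congr_left fun u => by ring

lemma sub (hf : HasCubicExpansion f a₀ a₁ a₂ a₃) (hg : HasCubicExpansion g b₀ b₁ b₂ b₃) :
    HasCubicExpansion (fun u => f u - g u) (a₀ - b₀) (a₁ - b₁) (a₂ - b₂) (a₃ - b₃) :=
  (IsLittleO.sub hf hg).congr_left fun u => by ring

lemma const_mul (c : ℝ) (hf : HasCubicExpansion f a₀ a₁ a₂ a₃) :
    HasCubicExpansion (fun u => c * f u) (c * a₀) (c * a₁) (c * a₂) (c * a₃) :=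
  (hf.const_mul_left c).congr_left fun u => by ring

lemma sum {ι : Type*} (s : Finset ι) {f : ι → ℝ → ℝ} {a₀ a₁ a₂ a₃ : ι → ℝ}
    (h : ∀ i ∈ s, HasCubicExpansion (f i) (a₀ i) (a₁ i) (a₂ i) (a₃ i)) :
    HasCubicExpansion (fun u => ∑ i ∈ s, f i u) (∑ i ∈ s, a₀ i) (∑ i ∈ s, a₁ i)
      (∑ i ∈ s, a₂ i) (∑ i ∈ s, a₃ i) :=
  (IsLittleO.sum h).congr_left fun u => by
    simp only [Finset.sum_apply, sum_sub_distrib, sum_add_distrib, sum_mul]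

lemma isBigO_one (hf : HasCubicExpansion f a₀ a₁ a₂ a₃) : f =O[𝓝 0] (fun _ => (1 : ℝ)) :=
  ((hf.isBigO.trans (isBigO_one_of_continuous (continuous_pow 3))).add
    (isBigO_one_of_continuous (f := fun u => a₀ + a₁ * u + a₂ * u ^ 2 + a₃ * u ^ 3)
      (by fun_prop))).congr_left fun u => by ring

lemma isBigO_id (hf : HasCubicExpansion f 0 a₁ a₂ a₃) : f =O[𝓝 0] (fun u => u) := by
  have hpoly : (fun u : ℝ => (a₁ + a₂ * u + a₃ * u ^ 2) * u) =O[𝓝 0] (fun u => u) :=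
    ((isBigO_one_of_continuous (by fun_prop)).mul (isBigO_refl _ _)).congr_right
      fun u => one_mul u
  exact (hf.isBigO.trans (isLittleO_pow_id (by norm_num)).isBigO |>.add hpoly).congr_left
    fun u => by ring

lemma mul (hf : HasCubicExpansion f a₀ a₁ a₂ a₃) (hg : HasCubicExpansion g b₀ b₁ b₂ b₃) :
    HasCubicExpansion (fun u => f u * g u) (a₀ * b₀) (a₀ * b₁ + a₁ * b₀)
      (a₀ * b₂ + a₁ * b₁ + a₂ * b₀) (a₀ * b₃ + a₁ * b₂ + a₂ * b₁ + a₃ * b₀) := by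
  -- the terms of degree `≥ 4` in the product of the two cubic polynomials
  have hhigh : (fun u : ℝ => u ^ 4 * ((a₁ * b₃ + a₂ * b₂ + a₃ * b₁)
      + (a₂ * b₃ + a₃ * b₂) * u + a₃ * b₃ * u ^ 2)) =O[𝓝 0] (· ^ 4) :=
    ((isBigO_refl _ _).mul (isBigO_one_of_continuous (by fun_prop))).congr_right
      fun u => mul_one _
  have hPg := ((isBigO_one_of_continuous (f := fun u : ℝ => a₀ + a₁ * u + a₂ * u ^ 2 + a₃ * u ^ 3)
    (by fun_prop)).mul_isLittleO hg).congr_right fun u => one_mul (u ^ 3)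
  have hfg := (hf.mul_isBigO hg.isBigO_one).congr_right fun u => mul_one (u ^ 3)
  exact ((isLittleO_cube_of_isBigO_pow_four hhigh).add (hPg.add hfg)).congr_left
    fun u => by ring

lemma exp (hf : HasCubicExpansion f 0 a₁ a₂ a₃) :
    HasCubicExpansion (fun u => Real.exp (f u)) 1 a₁ (a₂ + a₁ ^ 2 / 2)
      (a₃ + a₁ * a₂ + a₁ ^ 3 / 6) := by
  have hf₀ : Tendsto f (𝓝 0) (𝓝 0) := hf.isBigO_id.trans_tendsto tendsto_id
  have hrem : (fun u => Real.exp (f u) - (1 + f u + f u ^ 2 / 2 + f u ^ 3 / 6))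
      =O[𝓝 0] (· ^ 4) := by
    refine (((Real.exp_sub_sum_range_isBigO_pow 4).comp_tendsto hf₀).trans
      (hf.isBigO_id.pow 4)).congr_left fun u => ?_
    simp [sum_range_succ, Nat.factorial]
  have htaylor := (((hasCubicExpansion_const 1).add hf).add ((hf.mul hf).const_mul (1 / 2))).add
    ((hf.mul (hf.mul hf)).const_mul (1 / 6))
  exact (IsLittleO.add (isLittleO_cube_of_isBigO_pow_four hrem) htaylor).congr_left
    fun u => by ring

lemma comp_const_mul (c : ℝ) (hf : HasCubicExpansion f a₀ a₁ a₂ a₃) :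
    HasCubicExpansion (fun u => f (c * u)) a₀ (a₁ * c) (a₂ * c ^ 2) (a₃ * c ^ 3) := by
  have hc : Tendsto (fun u : ℝ => c * u) (𝓝 0) (𝓝 0) := by
    simpa using (continuous_const_mul c).tendsto 0
  refine ((hf.comp_tendsto hc).trans_isBigO ?_).congr_left fun u => ?_
  · exact (isBigO_refl _ _).const_mul_left (c ^ 3) |>.congr_left fun u => by
      simp only [Function.comp_apply]; ring
  · simp only [Function.comp_apply]
    ring

lemma tendsto_div_cube (hf : HasCubicExpansion f 0 0 0 a₃) :
    Tendsto (fun u => f u / u ^ 3) (𝓝[≠] 0) (𝓝 a₃) := by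
  have h := (hf.tendsto_div_nhds_zero.mono_left (nhdsWithin_le_nhds (s := {0}ᶜ))).add_const a₃
  rw [zero_add] at h
  refine h.congr' (eventually_nhdsWithin_of_forall fun u (hu : u ≠ 0) => ?_)
  field_simp
  ring

end HasCubicExpansion

lemma hasCubicExpansion_exp_const_mul (c : ℝ) :
    HasCubicExpansion (fun u => Real.exp (c * u)) 1 c (c ^ 2 / 2) (c ^ 3 / 6) :=
  ((hasCubicExpansion_id.const_mul c).congr_coeffs (mul_zero c) (mul_one c) (mul_zero c)
    (mul_zero c)).exp.congr_coeffs rfl rfl (by ring) (by ring)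

lemma hasCubicExpansion_neg_log_one_sub :
    HasCubicExpansion (fun u => -Real.log (1 - u)) 0 1 (1 / 2) (1 / 3) := by
  refine isLittleO_cube_of_isBigO_pow_four (IsBigO.of_bound 2 ?_)
  filter_upwards [Metric.ball_mem_nhds (0 : ℝ) (by norm_num : (0 : ℝ) < 1 / 2)] with u hu
  rw [Metric.mem_ball, dist_zero_right, Real.norm_eq_abs] at hu
  have h := Real.abs_log_sub_add_sum_range_le (hu.trans (by norm_num)) 3
  norm_num [sum_range_succ] at h
  rw [Real.norm_eq_abs, Real.norm_eq_abs, abs_pow]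
  calc _ = |u + u ^ 2 / 2 + u ^ 3 / 3 + Real.log (1 - u)| := by
        rw [← abs_neg]; congr 1; ring
    _ ≤ |u| ^ 4 / (1 - |u|) := h
    _ ≤ 2 * |u| ^ 4 := by
        rw [div_le_iff₀ (by linarith)]
        nlinarith [pow_nonneg (abs_nonneg u) 4]

lemma hasCubicExpansion_one_sub_rpow_neg (p : ℝ) :
    HasCubicExpansion (fun u => (1 - u) ^ (-p)) 1 p (p * (p + 1) / 2)
      (p * (p + 1) * (p + 2) / 6) := by
  have hlog := (hasCubicExpansion_neg_log_one_sub.const_mul p).congr_coeffs (mul_zero p)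
    rfl rfl rfl
  refine (hlog.exp.congr ?_).congr_coeffs rfl (mul_one p) (by ring) (by ring)
  filter_upwards [Iio_mem_nhds (by norm_num : (0 : ℝ) < 1)] with u (hu : u < 1)
  rw [Real.rpow_def_of_pos (by linarith)]
  ring_nf

lemma hasCubicExpansion_mul_div_four_sub_two_mul (a : ℝ) :
    HasCubicExpansion (fun u => a * u / (4 - 2 * u)) 0 (a / 4) (a / 8) (a / 16) := by
  have hgeom := (hasCubicExpansion_one_sub_rpow_neg 1).comp_const_mul (1 / 2)
  refine (((hasCubicExpansion_id.const_mul (a / 4)).mul hgeom).congr ?_).congr_coeffs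
    (by ring) (by ring) (by ring) (by ring)
  filter_upwards [Iio_mem_nhds (by norm_num : (0 : ℝ) < 2)] with u (hu : u < 2)
  have hu' : (4 : ℝ) - 2 * u ≠ 0 := by linarith
  rw [Real.rpow_neg_one, show (1 : ℝ) - 1 / 2 * u = (4 - 2 * u) / 4 by ring]
  field_simp

lemma hasCubicExpansion_one_sub_half_rpow_neg_mul_exp (p a : ℝ) :
    HasCubicExpansion (fun u => (1 - u / 2) ^ (-p) * Real.exp (a * u / (4 - 2 * u))) 1
      (p / 2 + a / 4) (p * (p + 1) / 8 + (1 + p) / 8 * a + a ^ 2 / 32)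
      (p * (p + 1) * (p + 2) / 48 + (1 / 16 + p / 16 + p * (p + 1) / 32) * a
        + (1 / 32 + p / 64) * a ^ 2 + a ^ 3 / 384) := by
  have hpow := (hasCubicExpansion_one_sub_rpow_neg p).comp_const_mul (1 / 2)
  refine ((hpow.mul (hasCubicExpansion_mul_div_four_sub_two_mul a).exp).congr ?_).congr_coeffs
    (by ring) (by ring) (by ring) (by ring)
  filter_upwards with u
  ring_nf

section Moments

variable {d n : ℕ} {Y : Fin n → EuclideanSpace ℝ (Fin d)}

lemma sum_inner_sq_eq (hcov : ∀ k l : Fin d, ∑ j, Y j k * Y j l = if k = l then (n : ℝ) else 0)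
    (x : EuclideanSpace ℝ (Fin d)) : ∑ j, ⟪x, Y j⟫ ^ 2 = n * ‖x‖ ^ 2 := by
  calc ∑ j, ⟪x, Y j⟫ ^ 2 = ∑ j, ∑ k, ∑ l, x k * x l * (Y j k * Y j l) := by
        refine sum_congr rfl fun j _ => ?_
        simp only [PiLp.inner_apply, RCLike.inner_apply, conj_trivial, sq, sum_mul_sum]
        exact sum_congr rfl fun k _ => sum_congr rfl fun l _ => by ring
    _ = ∑ k, ∑ l, x k * x l * ∑ j, Y j k * Y j l := by
        simp_rw [mul_sum]
        rw [sum_comm]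
        exact sum_congr rfl fun k _ => sum_comm
    _ = n * ∑ k, x k ^ 2 := by
        simp [hcov, mul_sum, sq, mul_comm]
    _ = n * ‖x‖ ^ 2 := by
        simp [EuclideanSpace.norm_sq_eq]

lemma sum_norm_sq_eq (hcov : ∀ k l : Fin d, ∑ j, Y j k * Y j l = if k = l then (n : ℝ) else 0) :
    ∑ j, ‖Y j‖ ^ 2 = n * d := by
  simp_rw [EuclideanSpace.norm_sq_eq, Real.norm_eq_abs, sq_abs, sq]
  rw [sum_comm]
  simp [hcov, mul_comm]

lemma sum_sum_mul_inner_left (hmean : ∑ j, Y j = 0) (f : Fin n → ℝ) :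
    ∑ i, ∑ j, f i * ⟪Y i, Y j⟫ = 0 := by
  simp [← mul_sum, ← inner_sum, hmean]

lemma sum_sum_mul_inner_right (hmean : ∑ j, Y j = 0) (f : Fin n → ℝ) :
    ∑ i, ∑ j, f j * ⟪Y i, Y j⟫ = 0 := by
  rw [sum_comm]
  simp [← mul_sum, ← sum_inner, hmean]

lemma sum_sum_mul_inner_sq_left (hiso : ∀ x, ∑ j, ⟪x, Y j⟫ ^ 2 = n * ‖x‖ ^ 2)
    (f : Fin n → ℝ) : ∑ i, ∑ j, f i * ⟪Y i, Y j⟫ ^ 2 = n * ∑ i, f i * ‖Y i‖ ^ 2 := by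
  rw [mul_sum]
  exact sum_congr rfl fun i _ => by rw [← mul_sum, hiso]; ring

lemma sum_sum_mul_inner_sq_right (hiso : ∀ x, ∑ j, ⟪x, Y j⟫ ^ 2 = n * ‖x‖ ^ 2)
    (f : Fin n → ℝ) : ∑ i, ∑ j, f j * ⟪Y i, Y j⟫ ^ 2 = n * ∑ j, f j * ‖Y j‖ ^ 2 := by
  rw [sum_comm, ← sum_sum_mul_inner_sq_left hiso f]
  exact sum_congr rfl fun i _ => sum_congr rfl fun j _ => by rw [real_inner_comm]

lemma sum_sum_norm_add_sq (hmean : ∑ j, Y j = 0) :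
    ∑ i, ∑ j, ‖Y i + Y j‖ ^ 2 = 2 * n * ∑ j, ‖Y j‖ ^ 2 := by
  calc ∑ i, ∑ j, ‖Y i + Y j‖ ^ 2 = ∑ i, ∑ j, (‖Y i‖ ^ 2 + ‖Y j‖ ^ 2 + 2 * ⟪Y i, Y j⟫) :=
        sum_congr rfl fun i _ => sum_congr rfl fun j _ => by rw [norm_add_sq_real]; ring
    _ = 2 * n * ∑ j, ‖Y j‖ ^ 2 := by
        simp only [sum_add_distrib, sum_sum_mul_inner_left hmean]
        simp only [sum_const, card_univ, Fintype.card_fin, nsmul_eq_mul, ← mul_sum]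
        ring

lemma sum_sum_norm_add_pow_four (hmean : ∑ j, Y j = 0)
    (hiso : ∀ x, ∑ j, ⟪x, Y j⟫ ^ 2 = n * ‖x‖ ^ 2) :
    ∑ i, ∑ j, ‖Y i + Y j‖ ^ 4
      = 2 * n * ∑ j, ‖Y j‖ ^ 4 + 2 * (∑ j, ‖Y j‖ ^ 2) ^ 2 + 4 * n * ∑ j, ‖Y j‖ ^ 2 := by
  calc ∑ i, ∑ j, ‖Y i + Y j‖ ^ 4
      = ∑ i, ∑ j, (‖Y i‖ ^ 4 + ‖Y j‖ ^ 4 + 2 * ‖Y i‖ ^ 2 * ‖Y j‖ ^ 2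
          + 4 * ‖Y i‖ ^ 2 * ⟪Y i, Y j⟫ + 4 * ‖Y j‖ ^ 2 * ⟪Y i, Y j⟫ + 4 * ⟪Y i, Y j⟫ ^ 2) :=
        sum_congr rfl fun i _ => sum_congr rfl fun j _ => by
          rw [show ‖Y i + Y j‖ ^ 4 = (‖Y i + Y j‖ ^ 2) ^ 2 by ring, norm_add_sq_real]; ring
    _ = _ := by
        simp only [sum_add_distrib, sum_sum_mul_inner_left hmean, sum_sum_mul_inner_right hmean,
          sum_sum_mul_inner_sq_left hiso]
        simp only [sum_const, card_univ, Fintype.card_fin, nsmul_eq_mul, ← mul_sum, ← sum_mul]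
        ring

lemma sum_sum_norm_add_pow_six (hmean : ∑ j, Y j = 0)
    (hiso : ∀ x, ∑ j, ⟪x, Y j⟫ ^ 2 = n * ‖x‖ ^ 2) :
    ∑ i, ∑ j, ‖Y i + Y j‖ ^ 6
      = 2 * n * ∑ j, ‖Y j‖ ^ 6 + 6 * (∑ j, ‖Y j‖ ^ 4) * (∑ j, ‖Y j‖ ^ 2)
        + 24 * n * ∑ j, ‖Y j‖ ^ 4 + 8 * ∑ i, ∑ j, ⟪Y i, Y j⟫ ^ 3
        + 12 * ∑ i, ∑ j, ⟪Y i, Y j⟫ * ‖Y i‖ ^ 2 * ‖Y j‖ ^ 2 := by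
  calc ∑ i, ∑ j, ‖Y i + Y j‖ ^ 6
      = ∑ i, ∑ j, (‖Y i‖ ^ 6 + ‖Y j‖ ^ 6 + 3 * ‖Y i‖ ^ 4 * ‖Y j‖ ^ 2
          + 3 * ‖Y i‖ ^ 2 * ‖Y j‖ ^ 4 + 6 * ‖Y i‖ ^ 4 * ⟪Y i, Y j⟫ + 6 * ‖Y j‖ ^ 4 * ⟪Y i, Y j⟫
          + 12 * ‖Y i‖ ^ 2 * ⟪Y i, Y j⟫ ^ 2 + 12 * ‖Y j‖ ^ 2 * ⟪Y i, Y j⟫ ^ 2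
          + 8 * ⟪Y i, Y j⟫ ^ 3 + 12 * (⟪Y i, Y j⟫ * ‖Y i‖ ^ 2 * ‖Y j‖ ^ 2)) :=
        sum_congr rfl fun i _ => sum_congr rfl fun j _ => by
          rw [show ‖Y i + Y j‖ ^ 6 = (‖Y i + Y j‖ ^ 2) ^ 3 by ring, norm_add_sq_real]; ring
    _ = _ := by
        simp only [sum_add_distrib, sum_sum_mul_inner_left hmean, sum_sum_mul_inner_right hmean,
          sum_sum_mul_inner_sq_left hiso, sum_sum_mul_inner_sq_right hiso]
        simp only [sum_const, card_univ, Fintype.card_fin, nsmul_eq_mul, ← mul_sum, ← sum_mul]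
        ring_nf
        rw [← sum_mul]
        ring

end Moments

/-- `β ^ (d/2) π ^ (-d/2) T_{n,β}` as a function of `u = 1/β`. -/
noncomputable def rescaledStat {d n : ℕ} (Y : Fin n → EuclideanSpace ℝ (Fin d)) (u : ℝ) : ℝ :=
  1 / n * ∑ i, ∑ j, Real.exp (‖Y i + Y j‖ ^ 2 / 4 * u) + n * (1 - u) ^ (-((d : ℝ) / 2))
    - 2 * ∑ j, (1 - u / 2) ^ (-((d : ℝ) / 2)) * Real.exp (‖Y j‖ ^ 2 * u / (4 - 2 * u))

lemma hasCubicExpansion_rescaledStat {d n : ℕ} (hn : 0 < n)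
    {Y : Fin n → EuclideanSpace ℝ (Fin d)} (hmean : ∑ j, Y j = 0)
    (hcov : ∀ k l : Fin d, ∑ j, Y j k * Y j l = if k = l then (n : ℝ) else 0) :
    HasCubicExpansion (rescaledStat Y) 0 0 0
      (n / 96 * (2 * ((1 / (n : ℝ) ^ 2) * ∑ j, ∑ k, ⟪Y j, Y k⟫ ^ 3)
        + 3 * ((1 / (n : ℝ) ^ 2) * ∑ j, ∑ k, ⟪Y j, Y k⟫ * ‖Y j‖ ^ 2 * ‖Y k‖ ^ 2))) := by
  have h₁ := (HasCubicExpansion.sum univ fun i _ => HasCubicExpansion.sum univ fun j _ =>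
    hasCubicExpansion_exp_const_mul (‖Y i + Y j‖ ^ 2 / 4)).const_mul (1 / n)
  have h₂ := (hasCubicExpansion_one_sub_rpow_neg ((d : ℝ) / 2)).const_mul n
  have h₃ := (HasCubicExpansion.sum univ fun j _ =>
    hasCubicExpansion_one_sub_half_rpow_neg_mul_exp ((d : ℝ) / 2) (‖Y j‖ ^ 2)).const_mul 2
  have hiso := sum_inner_sq_eq hcov
  have hn' : (n : ℝ) ≠ 0 := by positivity
  refine ((h₁.add h₂).sub h₃).congr_coeffs ?_ ?_ ?_ ?_ <;>
    simp only [div_pow, ← pow_mul, Nat.reduceMul, ← sum_div, sum_add_distrib, ← mul_sum,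
      sum_const, card_univ, Fintype.card_fin, nsmul_eq_mul]
  · field_simp
    ring
  · rw [sum_sum_norm_add_sq hmean, sum_norm_sq_eq hcov]
    field_simp
    ring
  · rw [sum_sum_norm_add_pow_four hmean hiso, sum_norm_sq_eq hcov]
    field_simp
    ring
  · rw [sum_sum_norm_add_pow_six hmean hiso, sum_norm_sq_eq hcov]
    field_simp
    ring

lemma one_sub_div_rpow_neg {β c : ℝ} (p : ℝ) (hβ : 0 < β) (hc : c < β) :
    (1 - c / β) ^ (-p) = β ^ p / (β - c) ^ p := by
  rw [show 1 - c / β = (β - c) / β by field_simp, Real.rpow_neg (by positivity),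
    Real.div_rpow (by linarith) hβ.le, inv_div]

lemma rescaledStat_inv {d n : ℕ} (Y : Fin n → EuclideanSpace ℝ (Fin d)) {β : ℝ} (hβ : 1 < β) :
    rescaledStat Y β⁻¹ = β ^ ((d : ℝ) / 2) *
      ((1 / (n : ℝ)) * ∑ i, ∑ j,
          (1 / β ^ ((d : ℝ) / 2)) * Real.exp (‖Y i + Y j‖ ^ 2 / (4 * β))
        + (n : ℝ) / (β - 1) ^ ((d : ℝ) / 2)
        - 2 * ∑ j, (1 / (β - 1 / 2) ^ ((d : ℝ) / 2))
            * Real.exp (‖Y j‖ ^ 2 / (4 * β - 2))) := by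
  have hβ₀ : 0 < β := by linarith
  have hβ₂ : 4 * β - 2 ≠ 0 := by linarith
  have hexp₁ : ∀ x : ℝ, x / 4 * (1 / β) = x / (4 * β) := fun x => by ring
  have hexp₂ : ∀ x : ℝ, x * (1 / β) / (4 - 2 * (1 / β)) = x / (4 * β - 2) := fun x => by
    field_simp
  rw [rescaledStat, ← one_div, show 1 / β / 2 = (1 / 2) / β by ring,
    one_sub_div_rpow_neg _ hβ₀ hβ, one_sub_div_rpow_neg _ hβ₀ (by linarith)]
  simp only [hexp₁, hexp₂, ← mul_sum]
  field_simp

theorem Tnbeta_limit_beta_infty (d n : ℕ) (hn : 0 < n)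
    (Y : Fin n → EuclideanSpace ℝ (Fin d))
    (hmean : ∑ j, Y j = 0)
    (hcov : ∀ k l : Fin d, ∑ j, Y j k * Y j l = if k = l then (n : ℝ) else 0)
    (T : ℝ → ℝ)
    (hT : ∀ β : ℝ, T β = Real.pi ^ ((d : ℝ) / 2) *
        ((1 / (n : ℝ)) * ∑ i, ∑ j,
            (1 / β ^ ((d : ℝ) / 2)) * Real.exp (‖Y i + Y j‖ ^ 2 / (4 * β))
          + (n : ℝ) / (β - 1) ^ ((d : ℝ) / 2)
          - 2 * ∑ j, (1 / (β - 1 / 2) ^ ((d : ℝ) / 2))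
              * Real.exp (‖Y j‖ ^ 2 / (4 * β - 2)))) :
    Tendsto (fun β : ℝ => β ^ (3 + (d : ℝ) / 2) * (96 * T β) / ((n : ℝ) * Real.pi ^ ((d : ℝ) / 2)))
      atTop
      (𝓝 (2 * ((1 / (n : ℝ) ^ 2) * ∑ j, ∑ k, ⟪Y j, Y k⟫ ^ 3)
        + 3 * ((1 / (n : ℝ) ^ 2) * ∑ j, ∑ k, ⟪Y j, Y k⟫ * ‖Y j‖ ^ 2 * ‖Y k‖ ^ 2))) := by
  have hn' : (n : ℝ) ≠ 0 := by positivity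
  have hinv : Tendsto (fun β : ℝ => β⁻¹) atTop (𝓝[≠] 0) :=
    tendsto_inv_atTop_nhdsGT_zero.mono_right (nhdsWithin_mono _ fun _ hx => ne_of_gt hx)
  have hlim := ((hasCubicExpansion_rescaledStat hn hmean hcov).tendsto_div_cube.comp
    hinv).const_mul (96 / (n : ℝ))
  rw [← mul_assoc, div_mul_div_cancel₀' (by norm_num) _ _, div_self hn', one_mul] at hlim
  refine hlim.congr' ?_
  filter_upwards [eventually_gt_atTop 1] with β hβ
  have hβ₀ : 0 < β := by linarith
  rw [Function.comp_apply, rescaledStat_inv Y hβ, hT, Real.rpow_add hβ₀, Real.rpow_ofNat]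
  field_simp
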